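/- arXiv:2001.01348 — 6 statements merged into one kernel-verified Lean document; each statement's English description precedes it below -/
import Mathlib

section
/- Let (c_m)_{m≥0} be an absolutely summable real sequence and f(t) = Σ_{m=0}^∞ c_m φ(2^m t) for t ∈ [0,1]. If ρ = (ρ_m)_{m≥0} is a Rademacher expansion of t ∈ [0,1], then f(t) = (1/4) · Σ_{m=0}^∞ c_m · (1 − Σ_{k=1}^∞ 2^{−k} ρ_m ρ_{m+k}). -/
open MeasureTheory Filter Set

/-- The tent map: distance to the nearest integer. -/
noncomputable def phi (t : ℝ) : ℝ := ⨅ z : ℤ, |t - (z : ℝ)|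

/-- A function in the Takagi class, for coefficient sequence `c`. -/
noncomputable def takagiF (c : ℕ → ℝ) (t : ℝ) : ℝ := ∑' m : ℕ, c m * phi (2 ^ m * t)

/-- `T(ρ) = Σ 2^{-(n+2)} (1 - ρ n)`. -/
noncomputable def Trho (ρ : ℕ → ℝ) : ℝ := ∑' n : ℕ, (1 - ρ n) / 2 ^ (n + 2)

/-- A `{-1,+1}`-valued sequence. -/
def IsSign (ρ : ℕ → ℝ) : Prop := ∀ n, ρ n = 1 ∨ ρ n = -1

/-- `ρ` is a Rademacher expansion of `t`. -/
def IsRademacherExp (ρ : ℕ → ℝ) (t : ℝ) : Prop := IsSign ρ ∧ Trho ρ = t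

/-- The step condition for coefficients `c`. -/
def StepCond (c : ℕ → ℝ) (ρ : ℕ → ℝ) : Prop :=
  ∀ n : ℕ, 1 ≤ n → ρ n * ∑ m ∈ Finset.range n, 2 ^ m * c m * ρ m ≤ 0

noncomputable def sharpAux (c : ℕ → ℝ) : ℕ → ℝ × ℝ
  | 0 => (1, c 0)
  | n + 1 =>
    let S := (sharpAux c n).2
    let r : ℝ := if S ≤ 0 then 1 else -1
    (r, S + 2 ^ (n + 1) * c (n + 1) * r)

/-- The sequence `ρ♯` for coefficients `c`. -/
noncomputable def rhoSharp (c : ℕ → ℝ) (n : ℕ) : ℝ := (sharpAux c n).1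

noncomputable def flatAux (c : ℕ → ℝ) : ℕ → ℝ × ℝ
  | 0 => (1, c 0)
  | n + 1 =>
    let S := (flatAux c n).2
    let r : ℝ := if S < 0 then 1 else -1
    (r, S + 2 ^ (n + 1) * c (n + 1) * r)

/-- The sequence `ρ♭` for coefficients `c`. -/
noncomputable def rhoFlat (c : ℕ → ℝ) (n : ℕ) : ℝ := (flatAux c n).1

/-- The Takagi–Landsberg function with parameter `α`. -/
noncomputable def fTL (α : ℝ) (t : ℝ) : ℝ := ∑' m : ℕ, α ^ m / 2 ^ m * phi (2 ^ m * t)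

noncomputable def sharpAuxTL (α : ℝ) : ℕ → ℝ × ℝ
  | 0 => (1, 1)
  | n + 1 =>
    let S := (sharpAuxTL α n).2
    let r : ℝ := if S ≤ 0 then 1 else -1
    (r, S + α ^ (n + 1) * r)

/-- The sequence `ρ♯(α)` for the Takagi–Landsberg function. -/
noncomputable def rhoSharpTL (α : ℝ) (n : ℕ) : ℝ := (sharpAuxTL α n).1

noncomputable def flatAuxTL (α : ℝ) : ℕ → ℝ × ℝ
  | 0 => (1, 1)
  | n + 1 =>
    let S := (flatAuxTL α n).2
    let r : ℝ := if S < 0 then 1 else -1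
    (r, S + α ^ (n + 1) * r)

/-- The sequence `ρ♭(α)` for the Takagi–Landsberg function. -/
noncomputable def rhoFlatTL (α : ℝ) (n : ℕ) : ℝ := (flatAuxTL α n).1

/-- `τ♯(α) = T(ρ♯(α))`. -/
noncomputable def tauSharp (α : ℝ) : ℝ := Trho (rhoSharpTL α)

/-- `τ♭(α) = T(ρ♭(α))`. -/
noncomputable def tauFlat (α : ℝ) : ℝ := Trho (rhoFlatTL α)

/-- The Littlewood polynomial `p_{2n}(x) = 1 - x - x² - ⋯ - x^{2n}`. -/
noncomputable def p2n (n : ℕ) (x : ℝ) : ℝ := 1 - ∑ m ∈ Finset.Icc 1 (2 * n), x ^ m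

/-!
With `R ρ = ∑ ρ n / 2 ^ n` one has `T ρ = 1/2 - R ρ / 4`, and multiplying by `2 ^ m` shifts
`ρ` by `m` places up to an integer, so `φ (2 ^ m t) = φ (1/2 - R σ / 4)` for the shifted sequence
`σ n = ρ (m + n)`. The tail `∑ σ (n + 1) / 2 ^ (n + 1)` has modulus at most `1`, so `R σ` has the
sign of `σ 0` and `φ (1/2 - R σ / 4) = 1/2 - |R σ| / 4 = (2 - σ 0 * R σ) / 4`, which is the `m`-th
summand of the formula.
-/

lemma phi_add_intCast (s : ℝ) (z : ℤ) : phi (s + z) = phi s := by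
  rw [phi, phi, ← (Equiv.addRight z).iInf_comp]
  simp only [Equiv.coe_addRight, Int.cast_add, add_sub_add_right_eq_sub]

lemma phi_eq_abs {s : ℝ} (hs : |s| ≤ 1 / 2) : phi s = |s| := by
  have hbdd : BddBelow (range fun z : ℤ => |s - z|) := ⟨0, by rintro _ ⟨z, rfl⟩; positivity⟩
  rw [phi]
  refine le_antisymm (by simpa using ciInf_le hbdd 0) (le_ciInf fun z => ?_)
  rcases eq_or_ne z 0 with rfl | hz
  · simp
  · have hz1 : (1 : ℝ) ≤ |(z : ℝ)| := by exact_mod_cast Int.one_le_abs hz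
    linarith [abs_sub_abs_le_abs_sub (z : ℝ) s, abs_sub_comm s z]

lemma phi_half_sub {x : ℝ} (hx : |x| ≤ 1 / 2) : phi (1 / 2 - x) = 1 / 2 - |x| := by
  rcases abs_le.mp hx with ⟨hx₁, hx₂⟩
  rcases le_total 0 x with h | h
  · rw [phi_eq_abs (by rw [abs_le]; constructor <;> linarith), abs_of_nonneg h,
      abs_of_nonneg (by linarith)]
  · have hshift : 1 / 2 - x = (-1 / 2 - x) + ((1 : ℤ) : ℝ) := by push_cast; ring
    rw [hshift, phi_add_intCast, phi_eq_abs (by rw [abs_le]; constructor <;> linarith),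
      abs_of_nonpos h, abs_of_nonpos (by linarith)]
    ring

section BinarySeries

variable {a : ℕ → ℝ}

lemma norm_div_two_pow_le (ha : ∀ n, |a n| ≤ 1) (n : ℕ) : ‖a n / 2 ^ n‖ ≤ (1 / 2) ^ n := by
  rw [Real.norm_eq_abs, abs_div, abs_pow, abs_two, one_div_pow]
  exact div_le_div_of_nonneg_right (ha n) (by positivity)

lemma summable_div_two_pow (ha : ∀ n, |a n| ≤ 1) : Summable fun n => a n / 2 ^ n :=
  .of_norm_bounded summable_geometric_two (norm_div_two_pow_le ha)

lemma abs_tsum_div_two_pow_le (ha : ∀ n, |a n| ≤ 1) : |∑' n, a n / 2 ^ n| ≤ 2 :=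
  tsum_of_norm_bounded hasSum_geometric_two (norm_div_two_pow_le ha)

lemma tsum_div_two_pow_eq_zero_add (ha : ∀ n, |a n| ≤ 1) :
    ∑' n, a n / 2 ^ n = a 0 + (∑' n, a (n + 1) / 2 ^ n) / 2 := by
  rw [(summable_div_two_pow ha).tsum_eq_zero_add, ← tsum_div_const]
  simp only [pow_zero, div_one, pow_succ, div_div]

end BinarySeries

namespace IsSign

variable {ρ : ℕ → ℝ}

lemma abs_le_one (hρ : IsSign ρ) (n : ℕ) : |ρ n| ≤ 1 := by
  rcases hρ n with h | h <;> simp [h]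

lemma mul_self (hρ : IsSign ρ) (n : ℕ) : ρ n * ρ n = 1 := by
  rcases hρ n with h | h <;> simp [h]

lemma comp_add_left (hρ : IsSign ρ) (m : ℕ) : IsSign fun n => ρ (m + n) :=
  fun n => hρ (m + n)

lemma mul_tsum_div_two_pow_eq_abs (hρ : IsSign ρ) :
    ρ 0 * ∑' n, ρ n / 2 ^ n = |∑' n, ρ n / 2 ^ n| := by
  have htail := abs_tsum_div_two_pow_le fun n => hρ.abs_le_one (n + 1)
  rw [tsum_div_two_pow_eq_zero_add hρ.abs_le_one]
  rcases hρ 0 with h | h <;> rw [h] <;> rcases abs_le.mp htail with ⟨h₁, h₂⟩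
  · rw [abs_of_nonneg (by linarith)]; ring
  · rw [abs_of_nonpos (by linarith)]; ring

end IsSign

lemma Trho_eq_half_sub {ρ : ℕ → ℝ} (hρ : ∀ n, |ρ n| ≤ 1) :
    Trho ρ = 1 / 2 - (∑' n, ρ n / 2 ^ n) / 4 := by
  have hterm : ∀ n, (1 - ρ n) / 2 ^ (n + 2) = 1 / 2 / 2 / 2 ^ n - ρ n / 2 ^ n / 4 := fun n => by
    rw [pow_add]; ring
  rw [Trho, tsum_congr hterm, (summable_geometric_two' _).tsum_sub
    ((summable_div_two_pow hρ).div_const 4), tsum_geometric_two', tsum_div_const]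

lemma two_mul_Trho {ρ : ℕ → ℝ} (hρ : IsSign ρ) :
    2 * Trho ρ = (1 - ρ 0) / 2 + Trho fun n => ρ (n + 1) := by
  rw [Trho_eq_half_sub hρ.abs_le_one, Trho_eq_half_sub fun n => hρ.abs_le_one (n + 1),
    tsum_div_two_pow_eq_zero_add hρ.abs_le_one]
  ring

lemma exists_two_pow_mul_Trho {ρ : ℕ → ℝ} (hρ : IsSign ρ) (m : ℕ) :
    ∃ z : ℤ, 2 ^ m * Trho ρ = z + Trho fun n => ρ (m + n) := by
  induction m generalizing ρ with
  | zero => exact ⟨0, by simp⟩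
  | succ m ih =>
    obtain ⟨z, hz⟩ := ih fun n => hρ (n + 1)
    obtain ⟨e, he⟩ : ∃ e : ℤ, (1 - ρ 0) / 2 = e := by
      rcases hρ 0 with h | h
      · exact ⟨0, by simp [h]⟩
      · exact ⟨1, by simp [h]⟩
    refine ⟨2 ^ m * e + z, ?_⟩
    have hshift : (fun n => ρ (m + n + 1)) = fun n => ρ (m + 1 + n) :=
      funext fun n => congrArg ρ (by omega)
    rw [pow_succ, mul_assoc, two_mul_Trho hρ, mul_add, hz, he, hshift]
    push_cast
    ring

lemma phi_Trho {ρ : ℕ → ℝ} (hρ : IsSign ρ) :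
    phi (Trho ρ) = (2 - ρ 0 * ∑' n, ρ n / 2 ^ n) / 4 := by
  have hR := abs_tsum_div_two_pow_le hρ.abs_le_one
  have hR4 : |(∑' n, ρ n / 2 ^ n) / 4| = |∑' n, ρ n / 2 ^ n| / 4 := by
    rw [abs_div, abs_of_pos (four_pos : (0 : ℝ) < 4)]
  rw [Trho_eq_half_sub hρ.abs_le_one, phi_half_sub (by linarith), hR4,
    hρ.mul_tsum_div_two_pow_eq_abs]
  ring

lemma phi_two_pow_mul_Trho {ρ : ℕ → ℝ} (hρ : IsSign ρ) (m : ℕ) :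
    phi (2 ^ m * Trho ρ) = 1 / 4 * (1 - ∑' k, ρ m * ρ (m + (k + 1)) / 2 ^ (k + 1)) := by
  obtain ⟨z, hz⟩ := exists_two_pow_mul_Trho hρ m
  have hσ := hρ.comp_add_left m
  rw [hz, add_comm, phi_add_intCast, phi_Trho hσ,
    (summable_div_two_pow hσ.abs_le_one).tsum_eq_zero_add]
  simp only [add_zero, pow_zero, div_one, mul_add]
  rw [hρ.mul_self m, ← tsum_mul_left]
  simp only [mul_div_assoc]
  ring

theorem takagi_class_rademacher_formula_general
    (c : ℕ → ℝ)
    (t : ℝ)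
    (ρ : ℕ → ℝ) (hρ : IsRademacherExp ρ t) :
    takagiF c t
      = (1 / 4) * ∑' m : ℕ, c m * (1 - ∑' k : ℕ, ρ m * ρ (m + (k + 1)) / 2 ^ (k + 1)) := by
  obtain ⟨hsign, rfl⟩ := hρ
  rw [takagiF, ← tsum_mul_left]
  exact tsum_congr fun m => by rw [phi_two_pow_mul_Trho hsign m]; ring

theorem takagi_class_rademacher_formula
    (c : ℕ → ℝ) (hc : Summable fun m => |c m|)
    (t : ℝ) (ht : t ∈ Set.Icc (0 : ℝ) 1)
    (ρ : ℕ → ℝ) (hρ : IsRademacherExp ρ t) :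
    takagiF c t
      = (1 / 4) * ∑' m : ℕ, c m * (1 - ∑' k : ℕ, ρ m * ρ (m + (k + 1)) / 2 ^ (k + 1)) :=
  takagi_class_rademacher_formula_general c t ρ hρ
end

section
/- Let (c_m)_{m≥0} be an absolutely summable real sequence and f(t) = Σ_{m=0}^∞ c_m φ(2^m t) for t ∈ [0,1]. Then f(t) ≥ 0 for all t ∈ [0,1] if and only if Σ_{m=0}^n 2^m c_m ≥ 0 for all n ≥ 0. -/
open MeasureTheory Filter Set

/-!
Write `g m = φ(2^m t) / 2^m`. Since `φ(2u) ≤ 2 φ(u)`, the sequence `g` is nonincreasing and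
nonnegative, and `f(t) = Σ (2^m c_m) g m`; Abel summation then shows that nonnegative partial sums
`Σ_{m ≤ n} 2^m c_m` force every partial sum of `f(t)` to be nonnegative. Conversely, at
`t = 2^{-(n+1)}` the terms with `m > n` vanish and the others equal `2^m c_m t`, so
`f(t) = 2^{-(n+1)} Σ_{m ≤ n} 2^m c_m`.
-/

open Finset

lemma phi_eq_abs_sub_round (t : ℝ) : phi t = |t - round t| :=
  le_antisymm (ciInf_le ⟨0, by rintro x ⟨z, rfl⟩; positivity⟩ (round t))
    (le_ciInf (round_le t))

lemma phi_nonneg (t : ℝ) : 0 ≤ phi t := by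
  rw [phi_eq_abs_sub_round]
  exact abs_nonneg _

lemma phi_le_one (t : ℝ) : phi t ≤ 1 := by
  rw [phi_eq_abs_sub_round]
  linarith [abs_sub_round t]

lemma phi_intCast (k : ℤ) : phi k = 0 := by
  simp [phi_eq_abs_sub_round]

lemma phi_two_mul_le (u : ℝ) : phi (2 * u) ≤ 2 * phi u := by
  rw [phi_eq_abs_sub_round, phi_eq_abs_sub_round, ← abs_two, ← abs_mul, abs_two]
  calc |2 * u - round (2 * u)| ≤ |2 * u - ((2 * round u : ℤ) : ℝ)| := round_le _ _
    _ = |2 * (u - round u)| := by push_cast; ring_nf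

lemma phi_of_nonneg_of_le_half {x : ℝ} (h0 : 0 ≤ x) (h : x ≤ 1 / 2) : phi x = x := by
  rw [phi_eq_abs_sub_round]
  refine le_antisymm (by simpa [abs_of_nonneg h0] using round_le x 0) (le_abs.2 ?_)
  rcases le_or_gt (round x) 0 with hz | hz
  · have : (round x : ℝ) ≤ 0 := by exact_mod_cast hz
    left; linarith
  · have : (1 : ℝ) ≤ round x := by exact_mod_cast hz
    right; linarith

lemma antitone_phi_two_pow_mul_div_two_pow (t : ℝ) :
    Antitone fun m : ℕ => phi (2 ^ m * t) / 2 ^ m := by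
  refine antitone_nat_of_succ_le fun m => ?_
  rw [pow_succ', mul_assoc, ← div_div]
  exact div_le_div_of_nonneg_right (by linarith [phi_two_mul_le (2 ^ m * t)]) (by positivity)

section AbelSummation

variable {R : Type*} [CommRing R] [PartialOrder R] [IsOrderedRing R] {a g : ℕ → R}

lemma sum_range_succ_mul_le_sum_mul_of_antitone
    (ha : ∀ n, 0 ≤ ∑ m ∈ range (n + 1), a m) (hg : Antitone g) (N : ℕ) :
    (∑ m ∈ range (N + 1), a m) * g N ≤ ∑ m ∈ range (N + 1), a m * g m := by
  induction N with
  | zero => simp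
  | succ N ih =>
    calc (∑ m ∈ range (N + 2), a m) * g (N + 1)
        = (∑ m ∈ range (N + 1), a m) * g (N + 1) + a (N + 1) * g (N + 1) := by
          rw [sum_range_succ, add_mul]
      _ ≤ (∑ m ∈ range (N + 1), a m) * g N + a (N + 1) * g (N + 1) := by
          gcongr
          exacts [ha N, hg N.le_succ]
      _ ≤ ∑ m ∈ range (N + 2), a m * g m := by
          rw [sum_range_succ _ (N + 1)]
          exact add_le_add_left ih _

lemma sum_range_mul_nonneg_of_antitone
    (ha : ∀ n, 0 ≤ ∑ m ∈ range (n + 1), a m) (hg : Antitone g) (hg₀ : ∀ n, 0 ≤ g n) (N : ℕ) :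
    0 ≤ ∑ m ∈ range N, a m * g m := by
  cases N with
  | zero => simp
  | succ N =>
    exact (mul_nonneg (ha N) (hg₀ N)).trans (sum_range_succ_mul_le_sum_mul_of_antitone ha hg N)

end AbelSummation

lemma summable_takagi_terms {c : ℕ → ℝ} (hc : Summable fun m => |c m|) (t : ℝ) :
    Summable fun m => c m * phi (2 ^ m * t) :=
  hc.of_norm_bounded fun m => by
    rw [Real.norm_eq_abs, abs_mul, abs_of_nonneg (phi_nonneg _)]
    exact mul_le_of_le_one_right (abs_nonneg _) (phi_le_one _)

lemma takagiF_nonneg {c : ℕ → ℝ} (hc : Summable fun m => |c m|)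
    (hs : ∀ n : ℕ, 0 ≤ ∑ m ∈ range (n + 1), 2 ^ m * c m) (t : ℝ) : 0 ≤ takagiF c t := by
  refine ge_of_tendsto' (summable_takagi_terms hc t).hasSum.tendsto_sum_nat fun N => ?_
  have hterm : ∀ m, c m * phi (2 ^ m * t) = 2 ^ m * c m * (phi (2 ^ m * t) / 2 ^ m) := fun m => by
    field_simp
  simp only [hterm]
  exact sum_range_mul_nonneg_of_antitone hs (antitone_phi_two_pow_mul_div_two_pow t)
    (fun m => div_nonneg (phi_nonneg _) (by positivity)) N

lemma takagiF_inv_two_pow (c : ℕ → ℝ) (n : ℕ) :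
    takagiF c (2 ^ (n + 1))⁻¹ = (∑ m ∈ range (n + 1), 2 ^ m * c m) / 2 ^ (n + 1) := by
  have hlow : ∀ m ∈ range (n + 1), c m * phi (2 ^ m * (2 ^ (n + 1))⁻¹)
      = 2 ^ m * c m / 2 ^ (n + 1) := fun m hm => by
    have hle : (2 : ℝ) ^ m * (2 ^ (n + 1))⁻¹ ≤ 1 / 2 := by
      rw [mul_inv_le_iff₀ (by positivity), pow_succ]
      have : (2 : ℝ) ^ m ≤ 2 ^ n := pow_le_pow_right₀ one_le_two (mem_range_succ_iff.1 hm)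
      linarith
    rw [phi_of_nonneg_of_le_half (by positivity) hle]
    ring
  have hhigh : ∀ m ∉ range (n + 1), c m * phi (2 ^ m * (2 ^ (n + 1))⁻¹) = 0 := fun m hm => by
    obtain ⟨k, rfl⟩ := Nat.exists_eq_add_of_le (not_lt.1 (mt mem_range.2 hm))
    have : (2 : ℝ) ^ (n + 1 + k) * (2 ^ (n + 1))⁻¹ = ((2 ^ k : ℤ) : ℝ) := by
      push_cast
      field_simp
      ring
    rw [this, phi_intCast, mul_zero]
  rw [takagiF, tsum_eq_sum hhigh, sum_div]
  exact sum_congr rfl hlow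

theorem takagi_class_nonneg_iff
    (c : ℕ → ℝ) (hc : Summable fun m => |c m|) :
    (∀ t ∈ Set.Icc (0 : ℝ) 1, 0 ≤ takagiF c t)
      ↔ ∀ n : ℕ, 0 ≤ ∑ m ∈ Finset.range (n + 1), 2 ^ m * c m := by
  refine ⟨fun h n => ?_, fun hs t _ => takagiF_nonneg hc hs t⟩
  have hmem : (2 ^ (n + 1) : ℝ)⁻¹ ∈ Set.Icc (0 : ℝ) 1 :=
    ⟨by positivity, inv_le_one_of_one_le₀ (one_le_pow₀ one_le_two)⟩
  have hval := h _ hmem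
  rw [takagiF_inv_two_pow] at hval
  exact nonneg_of_mul_nonneg_left (by rwa [div_eq_mul_inv] at hval) (by positivity)
end

section
/- Let (c_m)_{m≥0} be an absolutely summable real sequence, let ρ♯ be the associated sharp sequence, and let Z = {n ≥ 0 : Σ_{m=0}^n 2^m c_m ρ♯_m = 0}. Then the set of {−1,+1}-valued sequences ρ with ρ_0 = +1 satisfying the step condition has exactly 2^n elements if Z is finite with |Z| = n, and has the cardinality of the continuum if Z is infinite. -/
open MeasureTheory Filter Set

/-! ### Auxiliary lemmas for counting step sequences -/

section StepCount

variable (c : ℕ → ℝ)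

lemma sharpAux_snd (n : ℕ) : (sharpAux c n).2
    = ∑ m ∈ Finset.range (n + 1), 2 ^ m * c m * rhoSharp c m := by
  induction n with
  | zero => simp [sharpAux, rhoSharp]
  | succ n ih =>
      rw [Finset.sum_range_succ, ← ih]
      simp [sharpAux, rhoSharp]

/-- `stepAux c b` builds the step sequence with free choices `b` at zeros. -/
noncomputable def stepAux (b : ℕ → Bool) : ℕ → ℝ × ℝ
  | 0 => (1, c 0)
  | n + 1 =>
    let S := (stepAux b n).2
    let r : ℝ := if S < 0 then 1 else if S = 0 then (if b n then 1 else -1) else -1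
    (r, S + 2 ^ (n + 1) * c (n + 1) * r)

noncomputable def stepSeq (b : ℕ → Bool) (n : ℕ) : ℝ := (stepAux c b n).1

lemma stepAux_snd (b : ℕ → Bool) (n : ℕ) : (stepAux c b n).2
    = ∑ m ∈ Finset.range (n + 1), 2 ^ m * c m * stepSeq c b m := by
  induction n with
  | zero => simp [stepAux, stepSeq]
  | succ n ih =>
      rw [Finset.sum_range_succ, ← ih]
      simp [stepAux, stepSeq]

lemma stepSeq_isSign (b : ℕ → Bool) : IsSign (stepSeq c b) := by
  intro n
  cases n with
  | zero => exact Or.inl rfl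
  | succ k =>
      simp only [stepSeq, stepAux]
      split_ifs <;> simp

lemma stepSeq_zero (b : ℕ → Bool) : stepSeq c b 0 = 1 := rfl

lemma stepSeq_stepCond (b : ℕ → Bool) : StepCond c (stepSeq c b) := by
  intro n hn
  match n, hn with
  | k + 1, _ =>
    rw [show ∑ m ∈ Finset.range (k + 1), 2 ^ m * c m * stepSeq c b m
        = (stepAux c b k).2 from (stepAux_snd c b k).symm]
    show (stepAux c b (k + 1)).1 * (stepAux c b k).2 ≤ 0
    simp only [stepAux]
    split_ifs with h1 h2 h3 <;> nlinarith

/-- Key invariant: any step sequence has partial sums `± (sharp partial sums)`. -/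
lemma absQ (ρ : ℕ → ℝ) (hs : IsSign ρ) (h0 : ρ 0 = 1) (hst : StepCond c ρ) :
    ∀ k, (∑ m ∈ Finset.range (k + 1), 2 ^ m * c m * ρ m = (sharpAux c k).2)
      ∨ (∑ m ∈ Finset.range (k + 1), 2 ^ m * c m * ρ m = -(sharpAux c k).2) := by
  intro k
  induction k with
  | zero => left; simp [sharpAux, h0]
  | succ k ih =>
    have hstep := hst (k + 1) (by omega)
    rw [Finset.sum_range_succ]
    have hsa : (sharpAux c (k + 1)).2
        = (sharpAux c k).2 + 2 ^ (k + 1) * c (k + 1) *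
            (if (sharpAux c k).2 ≤ 0 then 1 else -1) := by
      simp [sharpAux]
    rw [hsa]
    rcases hs (k + 1) with h1 | h1 <;> rw [h1] at hstep ⊢ <;>
      rcases ih with h2 | h2 <;> split_ifs with hle <;>
      first
        | (left; linarith)
        | (right; linarith)

lemma forced (ρ : ℕ → ℝ) (hs : IsSign ρ) (hst : StepCond c ρ) (k : ℕ)
    (h : (∑ m ∈ Finset.range (k + 1), 2 ^ m * c m * ρ m) ≠ 0) :
    ρ (k + 1) = if (∑ m ∈ Finset.range (k + 1), 2 ^ m * c m * ρ m) < 0 then 1 else -1 := by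
  have hstep := hst (k + 1) (by omega)
  have h' := h.lt_or_gt
  rcases hs (k + 1) with h1 | h1 <;> rw [h1] at hstep ⊢ <;> split_ifs with hlt <;>
    first
      | rfl
      | (exfalso; rcases h' with h' | h' <;> nlinarith)

lemma stepSeq_at_zero (b : ℕ → Bool) (k : ℕ) (hz : (sharpAux c k).2 = 0) :
    stepSeq c b (k + 1) = if b k then 1 else -1 := by
  have hq := absQ c (stepSeq c b) (stepSeq_isSign c b) (stepSeq_zero c b)
    (stepSeq_stepCond c b) k
  rw [← stepAux_snd c b k] at hq
  have h0 : (stepAux c b k).2 = 0 := by rcases hq with h | h <;> rw [h, hz]; simp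
  show (stepAux c b (k + 1)).1 = _
  simp only [stepAux]
  rw [if_neg (by rw [h0]; exact lt_irrefl 0), if_pos h0]

lemma step_equiv :
    Nonempty ({ρ : ℕ → ℝ // IsSign ρ ∧ ρ 0 = 1 ∧ StepCond c ρ}
      ≃ ({k : ℕ | (sharpAux c k).2 = 0} → Prop)) := by
  classical
  set Z := {k : ℕ | (sharpAux c k).2 = 0} with hZ
  let F : {ρ : ℕ → ℝ // IsSign ρ ∧ ρ 0 = 1 ∧ StepCond c ρ} → (Z → Prop) :=
    fun ρ k => ρ.1 (k.1 + 1) = 1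
  refine ⟨Equiv.ofBijective F ⟨?_, ?_⟩⟩
  · rintro ⟨ρ, hs, h0, hst⟩ ⟨ρ', hs', h0', hst'⟩ h
    have hagree : ∀ k : ℕ, (sharpAux c k).2 = 0 → ρ (k + 1) = ρ' (k + 1) := by
      intro k hk
      have hcf := congrFun h (⟨k, hk⟩ : Z)
      simp only [F] at hcf
      rcases hs (k + 1) with ha | ha <;> rcases hs' (k + 1) with hb | hb <;>
        rw [ha, hb] <;> rw [ha, hb] at hcf <;> first | rfl | (exfalso; norm_num at hcf)
    apply Subtype.ext
    show ρ = ρ'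
    funext n
    induction n using Nat.strong_induction_on with
    | _ n ih =>
      match n with
      | 0 => rw [h0, h0']
      | k + 1 =>
        have hsum : ∑ m ∈ Finset.range (k + 1), 2 ^ m * c m * ρ m
            = ∑ m ∈ Finset.range (k + 1), 2 ^ m * c m * ρ' m :=
          Finset.sum_congr rfl fun m hm => by
            rw [ih m (Finset.mem_range.mp hm)]
        by_cases hz : (sharpAux c k).2 = 0
        · exact hagree k hz
        · have hne : (∑ m ∈ Finset.range (k + 1), 2 ^ m * c m * ρ m) ≠ 0 := by
            rcases absQ c ρ hs h0 hst k with h2 | h2 <;> rw [h2] <;> simpa using hz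
          have hne' : (∑ m ∈ Finset.range (k + 1), 2 ^ m * c m * ρ' m) ≠ 0 := by
            rw [← hsum]; exact hne
          rw [forced c ρ hs hst k hne, forced c ρ' hs' hst' k hne', hsum]
  · intro P
    set b : ℕ → Bool := fun n => decide (∃ h : n ∈ Z, P ⟨n, h⟩) with hb
    refine ⟨⟨stepSeq c b, stepSeq_isSign c b, stepSeq_zero c b, stepSeq_stepCond c b⟩, ?_⟩
    funext k
    have hk : (sharpAux c k.1).2 = 0 := k.2
    have hv := stepSeq_at_zero c b k.1 hk
    show (stepSeq c b (k.1 + 1) = 1) = P k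
    rw [hv]
    by_cases hP : P k
    · have hbk : b k.1 = true := by
        rw [hb]; exact decide_eq_true ⟨k.2, by simpa using hP⟩
      rw [if_pos hbk]
      simp [hP]
    · have hbk : b k.1 = false := by
        rw [hb]
        apply decide_eq_false
        rintro ⟨h1, h2⟩
        exact hP (by simpa using h2)
      rw [if_neg (by rw [hbk]; exact Bool.false_ne_true)]
      simp only [eq_iff_iff]
      constructor
      · intro h'; norm_num at h'
      · intro h'; exact absurd h' hP

end StepCount

theorem takagi_class_number_of_step_sequences
    (c : ℕ → ℝ) (hc : Summable fun m => |c m|) :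
    (∀ n : ℕ,
        ({k : ℕ | ∑ m ∈ Finset.range (k + 1), 2 ^ m * c m * rhoSharp c m = 0}).Finite →
        ({k : ℕ | ∑ m ∈ Finset.range (k + 1), 2 ^ m * c m * rhoSharp c m = 0}).ncard = n →
        Nat.card {ρ : ℕ → ℝ // IsSign ρ ∧ ρ 0 = 1 ∧ StepCond c ρ} = 2 ^ n)
    ∧ (({k : ℕ | ∑ m ∈ Finset.range (k + 1), 2 ^ m * c m * rhoSharp c m = 0}).Infinite →
        Cardinal.mk {ρ : ℕ → ℝ // IsSign ρ ∧ ρ 0 = 1 ∧ StepCond c ρ}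
          = Cardinal.continuum) := by
  classical
  have hset : {k : ℕ | ∑ m ∈ Finset.range (k + 1), 2 ^ m * c m * rhoSharp c m = 0}
      = {k : ℕ | (sharpAux c k).2 = 0} := by
    ext k; simp [sharpAux_snd]
  obtain ⟨e⟩ := step_equiv c
  constructor
  · intro n hfin hcard
    rw [hset] at hfin hcard
    haveI : Finite ({k : ℕ | (sharpAux c k).2 = 0} : Set ℕ) := hfin.to_subtype
    rw [Nat.card_congr e, Nat.card_fun, Nat.card_eq_fintype_card, Fintype.card_prop,
      Nat.card_coe_set_eq, hcard]
  · intro hinf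
    rw [hset] at hinf
    haveI : Infinite ({k : ℕ | (sharpAux c k).2 = 0} : Set ℕ) := hinf.to_subtype
    rw [Cardinal.mk_congr e, ← Cardinal.power_def, Cardinal.mk_Prop,
      Cardinal.mk_eq_aleph0, Cardinal.two_power_aleph0]
end

section
/- For each n ∈ ℕ (n ≥ 1), the Littlewood polynomial p_{2n}(x) = 1 − x − x² − ⋯ − x^{2n−1} − x^{2n} has a unique negative real root x_n. Moreover, the sequence (x_n)_{n≥1} is strictly increasing, every x_n lies in (−2,−1), and x_n → −1 as n → ∞. -/
open MeasureTheory Filter Set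

/-!
Substituting `x = -t` and multiplying by `x - 1`, a negative root of `p2n n` is the same as a
positive zero of `t ↦ t ^ (2n) - 2 - t⁻¹`, the sum of two strictly increasing functions on
`(0, ∞)`. It changes sign on `[1, 2]`, which gives existence, uniqueness and `x_n ∈ (-2, -1)`.
For `t > 1` the function grows with the exponent, so the zeros decrease in `n`, and Bernoulli's
inequality `1 + 2n (t - 1) ≤ t ^ (2n) = 2 + t⁻¹ < 3` squeezes the zero to within `1/n` of `1`.
-/

namespace Littlewood

noncomputable def rootFn (k : ℕ) (t : ℝ) : ℝ := t ^ k - 2 - t⁻¹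

theorem p2n_mul_sub_one (n : ℕ) (x : ℝ) : p2n n x * (x - 1) = 2 * x - 1 - x ^ (2 * n + 1) := by
  rw [p2n, sub_mul, ← Finset.Ico_add_one_right_eq_Icc, geom_sum_Ico_mul x (by omega)]
  ring

theorem p2n_neg_eq_zero_iff {t : ℝ} (ht : 0 < t) (n : ℕ) :
    p2n n (-t) = 0 ↔ rootFn (2 * n) t = 0 := by
  have key : p2n n (-t) * (-t - 1) = t * rootFn (2 * n) t := by
    rw [p2n_mul_sub_one, rootFn, Odd.neg_pow ⟨n, rfl⟩]
    field_simp
    ring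
  constructor
  · intro h
    simpa [h, ht.ne'] using key
  · intro h
    simpa [h, show -t - 1 ≠ 0 by linarith] using key

variable {k : ℕ}

theorem continuousOn_rootFn : ContinuousOn (rootFn k) (Ioi 0) :=
  ((continuous_pow k).continuousOn.sub continuousOn_const).sub
    (continuousOn_inv₀.mono fun _ ht => (mem_Ioi.mp ht).ne')

theorem strictMonoOn_rootFn (hk : k ≠ 0) : StrictMonoOn (rootFn k) (Ioi 0) := by
  intro s hs t ht hst
  have hpow : s ^ k < t ^ k := pow_lt_pow_left₀ hst (le_of_lt hs) hk
  have hinv : t⁻¹ < s⁻¹ := inv_strictAntiOn hs ht hst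
  simp only [rootFn]
  linarith

theorem exists_rootFn_eq_zero (hk : 2 ≤ k) : ∃ t ∈ Ioo (1 : ℝ) 2, rootFn k t = 0 := by
  have h1 : rootFn k 1 < 0 := by norm_num [rootFn]
  have h2 : 0 < rootFn k 2 := by
    have : (4 : ℝ) ≤ 2 ^ k := by
      calc (4 : ℝ) = 2 ^ 2 := by norm_num
        _ ≤ 2 ^ k := pow_le_pow_right₀ one_le_two hk
    norm_num [rootFn]
    linarith
  exact intermediate_value_Ioo one_le_two
    (continuousOn_rootFn.mono fun t ht => one_pos.trans_le ht.1) ⟨h1, h2⟩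

theorem eq_of_rootFn_eq_zero (hk : k ≠ 0) {s t : ℝ} (hs : 0 < s) (ht : 0 < t)
    (hs0 : rootFn k s = 0) (ht0 : rootFn k t = 0) : s = t :=
  (strictMonoOn_rootFn hk).injOn hs ht (hs0.trans ht0.symm)

theorem lt_of_rootFn_eq_zero {l : ℕ} (hkl : k < l) {s t : ℝ} (hs : 1 < s) (ht : 0 < t)
    (hs0 : rootFn k s = 0) (ht0 : rootFn l t = 0) : t < s := by
  have hgrow : rootFn k s < rootFn l s := by
    simpa only [rootFn, sub_lt_sub_iff_right] using pow_lt_pow_right₀ hs hkl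
  exact (strictMonoOn_rootFn (by omega : l ≠ 0)).lt_iff_lt ht (one_pos.trans hs) |>.mp
    (by rw [ht0, ← hs0]; exact hgrow)

theorem mul_sub_one_lt_of_rootFn_eq_zero {t : ℝ} (ht : 1 < t) (h0 : rootFn k t = 0) :
    k * (t - 1) < 2 := by
  have hbernoulli := one_add_mul_sub_le_pow (by linarith : (-1 : ℝ) ≤ t) k
  have hpow : t ^ k = 2 + t⁻¹ := by
    simp only [rootFn] at h0
    linarith
  have hinv : t⁻¹ < 1 := inv_lt_one_of_one_lt₀ ht
  linarith

theorem tendsto_one_of_rootFn_two_mul_eq_zero {r : ℕ → ℝ}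
    (hr : ∀ᶠ n in atTop, 1 < r n ∧ rootFn (2 * n) (r n) = 0) : Tendsto r atTop (nhds 1) := by
  refine tendsto_of_tendsto_of_tendsto_of_le_of_le' tendsto_const_nhds
    (by simpa using (tendsto_const_nhds (x := (1 : ℝ))).add tendsto_one_div_atTop_nhds_zero_nat)
    (hr.mono fun n hn => hn.1.le) ?_
  filter_upwards [hr, eventually_gt_atTop 0] with n ⟨hr1, hr0⟩ hn
  have hbound := mul_sub_one_lt_of_rootFn_eq_zero hr1 hr0
  push_cast at hbound
  rw [← sub_le_iff_le_add', ← one_div, le_div_iff₀ (Nat.cast_pos.mpr hn)]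
  linarith

end Littlewood

open Littlewood in
theorem littlewood_negative_roots :
    ∃ x : ℕ → ℝ,
      (∀ n : ℕ, 1 ≤ n →
        (x n < 0 ∧ p2n n (x n) = 0) ∧ ∀ y : ℝ, y < 0 → p2n n y = 0 → y = x n)
      ∧ StrictMonoOn x (Set.Ici 1)
      ∧ (∀ n : ℕ, 1 ≤ n → x n ∈ Set.Ioo (-2 : ℝ) (-1))
      ∧ Filter.Tendsto x Filter.atTop (nhds (-1 : ℝ)) := by
  have hzero (n : ℕ) : ∃ t, 1 ≤ n → t ∈ Ioo (1 : ℝ) 2 ∧ rootFn (2 * n) t = 0 := by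
    by_cases hn : 1 ≤ n
    · exact (exists_rootFn_eq_zero (by omega)).imp fun _ ht _ => ht
    · exact ⟨0, (absurd · hn)⟩
  choose r hr using hzero
  have hpos (n : ℕ) (hn : 1 ≤ n) : 0 < r n := one_pos.trans (hr n hn).1.1
  refine ⟨fun n => -r n, fun n hn => ⟨⟨neg_neg_of_pos (hpos n hn), ?_⟩, fun y hy hy0 => ?_⟩,
    fun m hm n hn hmn => ?_, fun n hn => ?_, ?_⟩
  · exact (p2n_neg_eq_zero_iff (hpos n hn) n).mpr (hr n hn).2
  · have hy' : 0 < -y := neg_pos.mpr hy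
    rw [← neg_neg y, p2n_neg_eq_zero_iff hy'] at hy0
    show y = -r n
    rw [← eq_of_rootFn_eq_zero (by omega) hy' (hpos n hn) hy0 (hr n hn).2, neg_neg]
  · exact neg_lt_neg <| lt_of_rootFn_eq_zero (by omega : 2 * m < 2 * n) (hr m hm).1.1
      (hpos n hn) (hr m hm).2 (hr n hn).2
  · obtain ⟨h1, h2⟩ := (hr n hn).1
    exact ⟨neg_lt_neg h2, neg_lt_neg h1⟩
  · suffices Tendsto r atTop (nhds 1) by simpa using this.neg
    exact tendsto_one_of_rootFn_two_mul_eq_zero <|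
      (eventually_ge_atTop 1).mono fun n hn => ⟨(hr n hn).1.1, (hr n hn).2⟩
end

section
/- There is no nonempty open interval contained in (1/2, 1) on which the function τ♭ is continuous, and there is no nonempty open interval contained in (1/2, 1) on which the function τ♯ is continuous. -/
open MeasureTheory Filter Set

open Topology

/-! The digits `ρ_n` are chosen greedily so that the partial sums `S_n = ∑_{m ≤ n} ρ_m α^m`
stay in `[-α^n, α^n]`; hence `∑ ρ_m α^m = 0`. If `T ∘ ρ` were continuous on an interval, then
by induction on `n` every digit `ρ_n` would be constant there: where `ρ_n` jumps while the
earlier digits agree, `T` jumps by at least `2^{-(j+1)}`, where `j > n` is the next `+1`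
digit, and for `α` bounded away from `1/2` such a `j` occurs within a bounded number of
steps. But then `∑ ρ_m α^m` would be one and the same power series with constant term `1`,
vanishing on a whole interval, which the identity theorem forbids. -/

noncomputable def partialPowerSum (α : ℝ) (ρ : ℕ → ℝ) (n : ℕ) : ℝ :=
  ∑ m ∈ Finset.range (n + 1), ρ m * α ^ m

lemma partialPowerSum_zero (α : ℝ) (ρ : ℕ → ℝ) : partialPowerSum α ρ 0 = ρ 0 := by
  simp [partialPowerSum]

lemma partialPowerSum_succ (α : ℝ) (ρ : ℕ → ℝ) (n : ℕ) :
    partialPowerSum α ρ (n + 1) = partialPowerSum α ρ n + ρ (n + 1) * α ^ (n + 1) :=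
  Finset.sum_range_succ _ _

lemma partialPowerSum_add_of_eq_neg_one {α : ℝ} {ρ : ℕ → ℝ} {n k : ℕ}
    (hneg : ∀ i < k, ρ (n + i + 1) = -1) :
    partialPowerSum α ρ (n + k) =
      partialPowerSum α ρ n - α ^ n * ∑ i ∈ Finset.range k, α ^ (i + 1) := by
  induction k with
  | zero => simp
  | succ k ih =>
    rw [← add_assoc, partialPowerSum_succ, ih fun i hi => hneg i (by omega),
      hneg k (by omega), Finset.sum_range_succ]
    ring

/-- Ties `S_n = 0` are left unconstrained, so that both `ρ♭(α)` and `ρ♯(α)` are instances. -/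
structure IsGreedySigns (α : ℝ) (ρ : ℕ → ℝ) : Prop where
  zero : ρ 0 = 1
  isSign : IsSign ρ
  of_pos : ∀ n, 0 < partialPowerSum α ρ n → ρ (n + 1) = -1
  of_neg : ∀ n, partialPowerSum α ρ n < 0 → ρ (n + 1) = 1

namespace IsGreedySigns

variable {α : ℝ} {ρ : ℕ → ℝ}

theorem abs_partialPowerSum_le (h : IsGreedySigns α ρ) (hα : 1 / 2 ≤ α) (n : ℕ) :
    |partialPowerSum α ρ n| ≤ α ^ n := by
  induction n with
  | zero => simp [partialPowerSum_zero, h.zero]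
  | succ n ih =>
    have hpow : α ^ (n + 1) = α ^ n * α := pow_succ α n
    have hpow_nonneg : 0 ≤ α ^ n := pow_nonneg (by linarith) n
    rw [abs_le] at ih ⊢
    rw [partialPowerSum_succ]
    rcases lt_trichotomy (partialPowerSum α ρ n) 0 with hneg | hzero | hpos
    · rw [h.of_neg n hneg]
      constructor <;> nlinarith
    · rcases h.isSign (n + 1) with h1 | h1 <;> rw [h1, hzero] <;> constructor <;> nlinarith
    · rw [h.of_pos n hpos]
      constructor <;> nlinarith

theorem hasSum_zero (h : IsGreedySigns α ρ) (hα : 1 / 2 ≤ α) (hα1 : α < 1) :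
    HasSum (fun m => ρ m * α ^ m) 0 := by
  have hα0 : 0 ≤ α := by linarith
  have hsummable : Summable fun m => ρ m * α ^ m := by
    refine Summable.of_norm_bounded (summable_geometric_of_lt_one hα0 hα1) fun m => ?_
    rcases h.isSign m with hm | hm <;> simp [hm, abs_of_nonneg hα0]
  refine hsummable.hasSum_iff_tendsto_nat.2 ((tendsto_add_atTop_iff_nat 1).1 ?_)
  exact squeeze_zero_norm (h.abs_partialPowerSum_le hα)
    (tendsto_pow_atTop_nhds_zero_of_lt_one hα0 hα1)

end IsGreedySigns

lemma exists_one_lt_sum_pow {c : ℝ} (hc : 1 / 2 < c) :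
    ∃ m : ℕ, 1 < ∑ i ∈ Finset.range m, c ^ (i + 1) := by
  rcases lt_or_ge c 1 with hc1 | hc1
  · have hsum := ((hasSum_geometric_of_lt_one (by linarith) hc1).mul_left c).tendsto_sum_nat
    have hlim : 1 < c * (1 - c)⁻¹ := by
      rw [← div_eq_mul_inv, one_lt_div (by linarith)]
      linarith
    obtain ⟨m, hm⟩ := (hsum.eventually (lt_mem_nhds hlim)).exists
    exact ⟨m, by simpa only [pow_succ'] using hm⟩
  · exact ⟨2, by simp [Finset.sum_range_succ]; nlinarith⟩

theorem IsGreedySigns.exists_uniform_gap {c : ℝ} (hc : 1 / 2 < c) :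
    ∃ K : ℕ, ∀ α, c ≤ α → ∀ ρ, IsGreedySigns α ρ → ∀ n, ∃ j, n < j ∧ j ≤ n + K ∧ ρ j = 1 := by
  obtain ⟨m, hm⟩ := exists_one_lt_sum_pow hc
  refine ⟨m + 1, fun α hcα ρ h n => ?_⟩
  by_contra! hnone
  have hneg : ∀ i < m, ρ (n + i + 1) = -1 := fun i hi =>
    (h.isSign _).resolve_left (hnone _ (by omega) (by omega))
  have hsum : 1 < ∑ i ∈ Finset.range m, α ^ (i + 1) := hm.trans_le <|
    Finset.sum_le_sum fun i _ => pow_le_pow_left₀ (by linarith) hcα _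
  have hS : partialPowerSum α ρ (n + m) < 0 := by
    have hbound := (abs_le.1 (h.abs_partialPowerSum_le (by linarith) n)).2
    have hpow : 0 < α ^ n := pow_pos (by linarith) n
    rw [partialPowerSum_add_of_eq_neg_one hneg]
    nlinarith
  exact hnone (n + m + 1) (by omega) (by omega) (h.of_neg _ hS)

lemma summable_Trho {ρ : ℕ → ℝ} (hρ : IsSign ρ) :
    Summable fun n => (1 - ρ n) / 2 ^ (n + 2) := by
  refine Summable.of_norm_bounded (summable_geometric_two' 1) fun n => ?_
  rcases hρ n with h | h <;> rw [h]
  · simp only [sub_self, zero_div, norm_zero]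
    positivity
  · rw [Real.norm_eq_abs, abs_of_nonneg (by positivity)]
    apply le_of_eq
    field_simp
    ring

lemma sum_range_two_div_pow (n : ℕ) :
    ∑ k ∈ Finset.range n, (2 : ℝ) / 2 ^ (k + 2) = 1 - 1 / 2 ^ n := by
  induction n with
  | zero => simp
  | succ n ih =>
    rw [Finset.sum_range_succ, ih]
    field_simp
    ring

theorem pow_le_Trho_sub_Trho {ρ σ : ℕ → ℝ} (hρ : IsSign ρ) (hσ : IsSign σ) {n j : ℕ}
    (hagree : ∀ m < n, ρ m = σ m) (hρn : ρ n = 1) (hσn : σ n = -1) (hnj : n < j)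
    (hρj : ρ j = 1) :
    (1 / 2 : ℝ) ^ (j + 1) ≤ Trho σ - Trho ρ := by
  set u : ℕ → ℝ := fun k => ((1 + ρ k) + (1 - σ k)) / 2 ^ (k + 2) with hu
  have hu_nonneg : ∀ k, 0 ≤ u k := fun k => by
    rcases hρ k with h | h <;> rcases hσ k with h' | h' <;> simp [hu, h, h'] <;> positivity
  have hu_sum : HasSum u (1 + Trho σ - Trho ρ) := by
    have hfun :
        u = fun k => 1 / 2 / 2 ^ k - (1 - ρ k) / 2 ^ (k + 2) + (1 - σ k) / 2 ^ (k + 2) := by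
      funext k
      simp only [hu]
      field_simp
      ring
    rw [hfun, show 1 + Trho σ - Trho ρ = 1 - Trho ρ + Trho σ by ring]
    exact ((hasSum_geometric_two' 1).sub (summable_Trho hρ).hasSum).add (summable_Trho hσ).hasSum
  have hhead : ∑ k ∈ Finset.range (n + 1), u k = 1 := by
    have hbelow : ∑ k ∈ Finset.range n, u k = ∑ k ∈ Finset.range n, (2 : ℝ) / 2 ^ (k + 2) :=
      Finset.sum_congr rfl fun k hk => by
        simp only [hu, hagree k (Finset.mem_range.1 hk)]
        ring
    rw [Finset.sum_range_succ, hbelow, sum_range_two_div_pow]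
    simp only [hu, hρn, hσn]
    field_simp
    ring
  have hj : (1 / 2 : ℝ) ^ (j + 1) ≤ u j := by
    simp only [hu, hρj]
    rw [div_pow, one_pow, div_le_div_iff₀ (by positivity) (by positivity)]
    rcases hσ j with h | h <;> rw [h] <;> ring_nf <;> norm_num
  have hle := hu_sum.summable.sum_le_tsum (insert j (Finset.range (n + 1)))
    (fun k _ => hu_nonneg k)
  rw [Finset.sum_insert (by simp; omega), hhead, hu_sum.tsum_eq] at hle
  linarith

theorem pow_le_abs_Trho_sub_Trho {ρ σ : ℕ → ℝ} (hρ : IsSign ρ) (hσ : IsSign σ) {n K : ℕ}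
    (hagree : ∀ m < n, ρ m = σ m) (hne : ρ n ≠ σ n)
    (hρK : ∃ j, n < j ∧ j ≤ n + K ∧ ρ j = 1) (hσK : ∃ j, n < j ∧ j ≤ n + K ∧ σ j = 1) :
    (1 / 2 : ℝ) ^ (n + K + 1) ≤ |Trho ρ - Trho σ| := by
  have hweight : ∀ j ≤ n + K, (1 / 2 : ℝ) ^ (n + K + 1) ≤ (1 / 2) ^ (j + 1) := fun j hj =>
    pow_le_pow_of_le_one (by norm_num) (by norm_num) (by omega)
  rcases hρ n with hρn | hρn <;> rcases hσ n with hσn | hσn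
  · exact absurd (hρn.trans hσn.symm) hne
  · obtain ⟨j, hnj, hjK, hρj⟩ := hρK
    have := pow_le_Trho_sub_Trho hρ hσ hagree hρn hσn hnj hρj
    rw [abs_sub_comm]
    exact (hweight j hjK).trans (this.trans (le_abs_self _))
  · obtain ⟨j, hnj, hjK, hσj⟩ := hσK
    have := pow_le_Trho_sub_Trho hσ hρ (fun m hm => (hagree m hm).symm) hσn hρn hnj hσj
    exact (hweight j hjK).trans (this.trans (le_abs_self _))
  · exact absurd (hρn.trans hσn.symm) hne

theorem exists_tsum_mul_pow_ne_zero {ε : ℕ → ℝ} (hε : ∀ m, |ε m| ≤ 1) (hε0 : ε 0 ≠ 0)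
    {a b : ℝ} (hab : a < b) (hsub : Ioo a b ⊆ Ioo (-1) 1) :
    ∃ α ∈ Ioo a b, ∑' m, ε m * α ^ m ≠ 0 := by
  by_contra! hzero
  set p := FormalMultilinearSeries.ofScalars ℝ ε
  have hradius : 1 ≤ p.radius :=
    p.le_radius_of_bound 1 fun m => by simpa [p, FormalMultilinearSeries.ofScalars_norm] using hε m
  have hanalytic : AnalyticOnNhd ℝ p.sum (Metric.ball 0 1) := fun x hx =>
    (p.hasFPowerSeriesOnBall (one_pos.trans_le hradius)).analyticAt_of_mem
      (Metric.eball_subset_eball hradius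
        (by rwa [← ENNReal.coe_one, Metric.eball_coe, NNReal.coe_one]))
  have hsum_eq : ∀ x : ℝ, p.sum x = ∑' m, ε m * x ^ m := fun x =>
    FormalMultilinearSeries.ofScalars_sum_eq ε x
  obtain ⟨z, hz⟩ := nonempty_Ioo.2 hab
  have hball : Ioo a b ⊆ Metric.ball (0 : ℝ) 1 := fun x hx => by
    simpa [Metric.mem_ball, abs_lt] using hsub hx
  have hvanish : p.sum =ᶠ[𝓝 z] 0 := by
    filter_upwards [Ioo_mem_nhds hz.1 hz.2] with x hx
    rw [hsum_eq, hzero x hx, Pi.zero_apply]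
  have h0 := hanalytic.eqOn_zero_of_preconnected_of_eventuallyEq_zero
    (convex_ball 0 1).isPreconnected (hball hz) hvanish (Metric.mem_ball_self one_pos)
  rw [Pi.zero_apply, hsum_eq, tsum_eq_single 0 fun m hm => by simp [zero_pow hm]] at h0
  exact hε0 (by simpa using h0)

theorem IsGreedySigns.eventually_apply_eq_of_continuousAt {ρ : ℝ → ℕ → ℝ}
    (hρ : ∀ α, IsGreedySigns α (ρ α)) {y : ℝ} (hy : 1 / 2 < y)
    (hcont : ContinuousAt (fun α => Trho (ρ α)) y) {n : ℕ}
    (hagree : ∀ᶠ x in 𝓝 y, ∀ m < n, ρ x m = ρ y m) :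
    ∀ᶠ x in 𝓝 y, ρ x n = ρ y n := by
  obtain ⟨c, hc, hcy⟩ := exists_between hy
  obtain ⟨K, hK⟩ := IsGreedySigns.exists_uniform_gap hc
  have hclose : ∀ᶠ x in 𝓝 y, |Trho (ρ x) - Trho (ρ y)| < (1 / 2) ^ (n + K + 1) := by
    simpa only [Real.dist_eq] using Metric.tendsto_nhds.1 hcont _ (by positivity)
  filter_upwards [hagree, hclose, Ioi_mem_nhds hcy] with x hx_agree hx_close hx_c
  by_contra hne
  exact (pow_le_abs_Trho_sub_Trho (hρ x).isSign (hρ y).isSign hx_agree hne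
    (hK x (le_of_lt hx_c) (ρ x) (hρ x) n) (hK y hcy.le (ρ y) (hρ y) n)).not_gt hx_close

theorem not_continuousOn_Trho_of_isGreedySigns {ρ : ℝ → ℕ → ℝ}
    (hρ : ∀ α, IsGreedySigns α (ρ α)) :
    ¬∃ a b : ℝ, a < b ∧ Ioo a b ⊆ Ioo (1 / 2 : ℝ) 1
        ∧ ContinuousOn (fun α => Trho (ρ α)) (Ioo a b) := by
  rintro ⟨a, b, hab, hsub, hcont⟩
  obtain ⟨y₀, hy₀⟩ := nonempty_Ioo.2 hab
  have hconst : ∀ n, ∀ x ∈ Ioo a b, ρ x n = ρ y₀ n := by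
    intro n
    induction n using Nat.strong_induction_on with
    | _ n ih =>
      have hloc : ∀ y ∈ Ioo a b, (fun x => ρ x n) =ᶠ[𝓝 y] fun _ => ρ y n := fun y hy =>
        IsGreedySigns.eventually_apply_eq_of_continuousAt hρ (hsub hy).1
          (hcont.continuousAt (Ioo_mem_nhds hy.1 hy.2)) <| by
            filter_upwards [Ioo_mem_nhds hy.1 hy.2] with x hx m hm
            rw [ih m hm x hx, ih m hm y hy]
      -- a locally constant `{±1}`-valued function on an interval is constant
      exact fun x hx => isPreconnected_Ioo.constant_of_mapsTo (toFinite {1, -1}).isDiscrete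
        (fun y hy => (continuousAt_const.congr (hloc y hy).symm).continuousWithinAt)
        (fun x _ => (hρ x).isSign n) hx hy₀
  obtain ⟨α, hα, hne⟩ := exists_tsum_mul_pow_ne_zero (ε := ρ y₀)
    (fun m => by rcases (hρ y₀).isSign m with h | h <;> simp [h]) (by simp [(hρ y₀).zero])
    hab (hsub.trans (Ioo_subset_Ioo (by norm_num) le_rfl))
  have hρα : ρ α = ρ y₀ := funext fun m => hconst m α hα
  exact hne (hρα ▸ ((hρ α).hasSum_zero (hsub hα).1.le (hsub hα).2).tsum_eq)

lemma flatAuxTL_snd (α : ℝ) (n : ℕ) :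
    (flatAuxTL α n).2 = partialPowerSum α (rhoFlatTL α) n := by
  induction n with
  | zero => simp [flatAuxTL, partialPowerSum_zero, rhoFlatTL]
  | succ n ih =>
    rw [partialPowerSum_succ, ← ih]
    simp only [flatAuxTL, rhoFlatTL]
    ring

lemma sharpAuxTL_snd (α : ℝ) (n : ℕ) :
    (sharpAuxTL α n).2 = partialPowerSum α (rhoSharpTL α) n := by
  induction n with
  | zero => simp [sharpAuxTL, partialPowerSum_zero, rhoSharpTL]
  | succ n ih =>
    rw [partialPowerSum_succ, ← ih]
    simp only [sharpAuxTL, rhoSharpTL]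
    ring

lemma rhoFlatTL_succ (α : ℝ) (n : ℕ) :
    rhoFlatTL α (n + 1) = if partialPowerSum α (rhoFlatTL α) n < 0 then 1 else -1 := by
  rw [← flatAuxTL_snd]
  rfl

lemma rhoSharpTL_succ (α : ℝ) (n : ℕ) :
    rhoSharpTL α (n + 1) = if partialPowerSum α (rhoSharpTL α) n ≤ 0 then 1 else -1 := by
  rw [← sharpAuxTL_snd]
  rfl

theorem isGreedySigns_rhoFlatTL (α : ℝ) : IsGreedySigns α (rhoFlatTL α) where
  zero := rfl
  isSign
    | 0 => .inl rfl
    | n + 1 => by rw [rhoFlatTL_succ]; split_ifs <;> simp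
  of_pos n h := by rw [rhoFlatTL_succ, if_neg h.not_gt]
  of_neg n h := by rw [rhoFlatTL_succ, if_pos h]

theorem isGreedySigns_rhoSharpTL (α : ℝ) : IsGreedySigns α (rhoSharpTL α) where
  zero := rfl
  isSign
    | 0 => .inl rfl
    | n + 1 => by rw [rhoSharpTL_succ]; split_ifs <;> simp
  of_pos n h := by rw [rhoSharpTL_succ, if_neg h.not_ge]
  of_neg n h := by rw [rhoSharpTL_succ, if_pos h.le]

theorem tau_nowhere_continuous_on_intervals :
    (¬∃ a b : ℝ, a < b ∧ Set.Ioo a b ⊆ Set.Ioo (1 / 2 : ℝ) 1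
        ∧ ContinuousOn tauFlat (Set.Ioo a b))
    ∧ (¬∃ a b : ℝ, a < b ∧ Set.Ioo a b ⊆ Set.Ioo (1 / 2 : ℝ) 1
        ∧ ContinuousOn tauSharp (Set.Ioo a b)) :=
  ⟨not_continuousOn_Trho_of_isGreedySigns isGreedySigns_rhoFlatTL,
    not_continuousOn_Trho_of_isGreedySigns isGreedySigns_rhoSharpTL⟩
end

section
/- The closure (in ℝ) of the set of all real roots of all Littlewood polynomials is equal to [−2, −1/2] ∪ [1/2, 2]. -/
open MeasureTheory Filter Set

/-!
Every root is nonzero and has modulus less than 2 by Cauchy's bound; the roots are closed under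
`x ↦ x⁻¹` (reverse the polynomial) and `x ↦ -x`, so they lie in `±[1/2, 2]`.

For density in `[1/2, 1]`, suppose `[a, b] ⊆ [1/2, 1)` contains no root and choose signs greedily
at `a`: `ρ (n + 1)` is opposite in sign to the partial sum `Sₙ(a) = ∑_{k ≤ n} ρ k aᵏ` (this is
`rhoSharpTL a`). No `Sₙ` vanishes on `[a, b]`, so the choice is greedy at every `x ∈ [a, b]`, and for
`x ≥ 1/2` greedy choices keep `|Sₙ(x)| ≤ xⁿ`. Thus `∑ ρ k xᵏ` vanishes on `[a, b]`, hence
identically by the identity theorem, contradicting `ρ 0 = 1`. Inversion gives `[1, 2]` and negation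
the negative half.
-/

open Polynomial

def IsLittlewood {R : Type*} [Ring R] (P : R[X]) : Prop :=
  ∀ i ≤ P.natDegree, P.coeff i = 1 ∨ P.coeff i = -1

def littlewoodRoots : Set ℝ := {x | ∃ P : ℝ[X], IsLittlewood P ∧ P.eval x = 0}

namespace IsLittlewood

variable {R : Type*} [Ring R] {P : R[X]}

lemma coeff_zero_ne_zero [Nontrivial R] (hP : IsLittlewood P) : P.coeff 0 ≠ 0 := by
  rcases hP 0 (Nat.zero_le _) with h | h <;> simp [h]

lemma ne_zero [Nontrivial R] (hP : IsLittlewood P) : P ≠ 0 :=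
  fun h ↦ hP.coeff_zero_ne_zero (by simp [h])

lemma reverse [Nontrivial R] (hP : IsLittlewood P) : IsLittlewood P.reverse := by
  have hdeg : P.reverse.natDegree = P.natDegree := by
    rw [reverse_natDegree, natTrailingDegree_eq_zero.mpr (.inr hP.coeff_zero_ne_zero),
      Nat.sub_zero]
  intro i hi
  rw [hdeg] at hi
  rw [coeff_reverse, revAt_le hi]
  exact hP _ (Nat.sub_le _ _)

lemma comp_neg_X (hP : IsLittlewood P) : IsLittlewood (P.comp (-X)) := by
  have hX : (-X : R[X]) = C (-1) * X := by simp
  have hdeg : (P.comp (-X)).natDegree = P.natDegree := by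
    rw [natDegree_eq_of_degree_eq degree_comp_neg_X]
  intro i hi
  rw [hdeg] at hi
  rw [hX, comp_C_mul_X_coeff]
  rcases (neg_one_pow_eq_or R i) with h | h <;> rcases hP i hi with h' | h' <;> simp [h, h']

lemma cauchyBound_le_two {K : Type*} [NormedDivisionRing K]
    {P : K[X]} (hP : IsLittlewood P) : cauchyBound P ≤ 2 := by
  have hnorm : ∀ i ≤ P.natDegree, ‖P.coeff i‖₊ = 1 := fun i hi ↦ by
    rcases hP i hi with h | h <;> simp [h]
  have hsup : (Finset.range P.natDegree).sup (‖P.coeff ·‖₊) ≤ 1 :=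
    Finset.sup_le fun i hi ↦ (hnorm i (Finset.mem_range.mp hi).le).le
  rw [cauchyBound, leadingCoeff, hnorm _ le_rfl, div_one, one_add_one_eq_two.symm]
  exact add_le_add_left hsup 1

end IsLittlewood

lemma PowerSeries.isLittlewood_trunc {R : Type*} [Ring R] {φ : PowerSeries R}
    (hφ : ∀ n, PowerSeries.coeff n φ = 1 ∨ PowerSeries.coeff n φ = -1) (n : ℕ) :
    IsLittlewood (PowerSeries.trunc (n + 1) φ) := by
  intro i hi
  rw [PowerSeries.coeff_trunc, if_pos (hi.trans_lt (PowerSeries.natDegree_trunc_lt φ n))]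
  exact hφ i

namespace littlewoodRoots

lemma ne_zero {x : ℝ} (hx : x ∈ littlewoodRoots) : x ≠ 0 := by
  rintro rfl
  obtain ⟨P, hP, hroot⟩ := hx
  exact hP.coeff_zero_ne_zero (by rwa [coeff_zero_eq_eval_zero])

lemma abs_lt_two {x : ℝ} (hx : x ∈ littlewoodRoots) : |x| < 2 := by
  obtain ⟨P, hP, hroot⟩ := hx
  have := (IsRoot.norm_lt_cauchyBound hP.ne_zero hroot).trans_le hP.cauchyBound_le_two
  exact_mod_cast this

lemma inv_mem {x : ℝ} (hx : x ∈ littlewoodRoots) : x⁻¹ ∈ littlewoodRoots := by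
  have : Invertible x := invertibleOfNonzero (ne_zero hx)
  obtain ⟨P, hP, hroot⟩ := hx
  refine ⟨P.reverse, hP.reverse, ?_⟩
  have := (eval₂_reverse_eq_zero_iff (RingHom.id ℝ) x P).mpr hroot
  rwa [invOf_eq_inv] at this

lemma neg_mem {x : ℝ} (hx : x ∈ littlewoodRoots) : -x ∈ littlewoodRoots := by
  obtain ⟨P, hP, hroot⟩ := hx
  exact ⟨P.comp (-X), hP.comp_neg_X, by simpa using hroot⟩

lemma subset_Icc_union_Icc :
    littlewoodRoots ⊆ Icc (-2) (-1 / 2) ∪ Icc (1 / 2) 2 := by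
  intro x hx
  have h2 := abs_lt_two hx
  have hinv := abs_lt_two (inv_mem hx)
  rw [abs_inv] at hinv
  have hpos : 0 < |x| := abs_pos.mpr (ne_zero hx)
  have hhalf : 1 / 2 ≤ |x| := by
    rw [inv_lt_comm₀ hpos two_pos] at hinv; linarith
  rcases le_or_gt 0 x with h | h
  · rw [abs_of_nonneg h] at h2 hhalf
    exact .inr ⟨hhalf, h2.le⟩
  · rw [abs_of_neg h] at h2 hhalf
    exact .inl ⟨by linarith, by linarith⟩

end littlewoodRoots

open FormalMultilinearSeries Topology in
lemma eq_zero_of_tsum_mul_pow_eqOn_Ioo {c : ℕ → ℝ} {M : ℝ} (hc : ∀ n, |c n| ≤ M) {a b : ℝ}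
    (ha : -1 ≤ a) (hab : a < b) (hb : b ≤ 1) (h : ∀ x ∈ Ioo a b, ∑' n, c n * x ^ n = 0) :
    c = 0 := by
  set p := ofScalars ℝ c
  have hrad : 1 ≤ p.radius := by
    have := p.le_radius_of_bound (C := M) (r := 1) fun n ↦ by simpa [p, ofScalars_norm] using hc n
    exact_mod_cast this
  have hp : HasFPowerSeriesOnBall p.sum p 0 p.radius :=
    p.hasFPowerSeriesOnBall (zero_lt_one.trans_le hrad)
  have hball : Metric.ball (0 : ℝ) 1 ⊆ Metric.eball 0 p.radius := fun x hx ↦ by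
    rw [Metric.mem_ball, dist_zero_right] at hx
    rw [Metric.mem_eball, edist_zero_right, ← ofReal_norm]
    exact lt_of_lt_of_le (ENNReal.ofReal_lt_one.mpr hx) hrad
  have hsum : ∀ x, p.sum x = ∑' n, c n * x ^ n := ofScalars_sum_eq c
  have hmid : (a + b) / 2 ∈ Metric.ball (0 : ℝ) 1 := by
    rw [Metric.mem_ball, dist_zero_right, Real.norm_eq_abs, abs_lt]; constructor <;> linarith
  have hzero : p.sum =ᶠ[𝓝 ((a + b) / 2)] 0 := by
    filter_upwards [Ioo_mem_nhds (by linarith : a < (a + b) / 2) (by linarith : (a + b) / 2 < b)]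
      with x hx
    rw [hsum, h x hx, Pi.zero_apply]
  have hF : p.sum =ᶠ[𝓝 0] 0 :=
    Filter.eventually_of_mem (Metric.ball_mem_nhds 0 one_pos)
      ((hp.analyticOnNhd.mono hball).eqOn_zero_of_preconnected_of_eventuallyEq_zero
        (convex_ball 0 1).isPreconnected hmid hzero)
  exact (ofScalars_series_eq_zero (E := ℝ)).mp (hp.hasFPowerSeriesAt.congr hF).eq_zero

lemma sharpAuxTL_snd_s19 (α : ℝ) (n : ℕ) :
    (sharpAuxTL α n).2 = ∑ k ∈ Finset.range (n + 1), rhoSharpTL α k * α ^ k := by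
  induction n with
  | zero => simp [sharpAuxTL, rhoSharpTL]
  | succ n ih =>
    rw [Finset.sum_range_succ, ← ih, rhoSharpTL, sharpAuxTL, mul_comm]

lemma isSign_rhoSharpTL (α : ℝ) : IsSign (rhoSharpTL α) := by
  rintro (_ | n)
  · simp [rhoSharpTL, sharpAuxTL]
  · simp only [rhoSharpTL, sharpAuxTL]
    split_ifs <;> simp

lemma rhoSharpTL_succ_mul_sum_nonpos (α : ℝ) (n : ℕ) :
    rhoSharpTL α (n + 1) * ∑ k ∈ Finset.range (n + 1), rhoSharpTL α k * α ^ k ≤ 0 := by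
  rw [← sharpAuxTL_snd_s19, rhoSharpTL, sharpAuxTL]
  dsimp only
  split_ifs <;> linarith

lemma abs_add_mul_le {s u t : ℝ} (hs : s = 1 ∨ s = -1) (hu : |u| ≤ 2 * t) (hsu : s * u ≤ 0) :
    |u + s * t| ≤ t := by
  rw [abs_le] at hu ⊢
  rcases hs with rfl | rfl <;> constructor <;> linarith

section Greedy

variable {ρ : ℕ → ℝ} {x : ℝ}

lemma IsSign.abs_eq_one (hρ : IsSign ρ) (n : ℕ) : |ρ n| = 1 := by
  rcases hρ n with h | h <;> simp [h]

lemma abs_sum_mul_pow_le_pow (hρ : IsSign ρ) (hx : 1 / 2 ≤ x)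
    (h : ∀ n, ρ (n + 1) * ∑ k ∈ Finset.range (n + 1), ρ k * x ^ k ≤ 0) (n : ℕ) :
    |∑ k ∈ Finset.range (n + 1), ρ k * x ^ k| ≤ x ^ n := by
  induction n with
  | zero => simp [hρ.abs_eq_one]
  | succ n ih =>
    rw [Finset.sum_range_succ]
    refine abs_add_mul_le (hρ _) (ih.trans ?_) (h n)
    rw [pow_succ]
    nlinarith [pow_nonneg (show (0 : ℝ) ≤ x by linarith) n]

lemma tsum_mul_pow_eq_zero (hρ : IsSign ρ) (hx : 1 / 2 ≤ x) (hx1 : x < 1)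
    (h : ∀ n, ρ (n + 1) * ∑ k ∈ Finset.range (n + 1), ρ k * x ^ k ≤ 0) :
    ∑' k, ρ k * x ^ k = 0 := by
  have hx0 : 0 ≤ x := by linarith
  have hsummable : Summable fun k ↦ ρ k * x ^ k :=
    .of_norm_bounded (summable_geometric_of_lt_one hx0 hx1) fun k ↦ by
      simp [hρ.abs_eq_one, abs_of_nonneg hx0]
  have hpartial := hsummable.hasSum.tendsto_sum_nat.comp (tendsto_add_atTop_nat 1)
  refine tendsto_nhds_unique hpartial (squeeze_zero_norm (abs_sum_mul_pow_le_pow hρ hx h) ?_)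
  exact tendsto_pow_atTop_nhds_zero_of_lt_one hx0 hx1

end Greedy

lemma IsPreconnected.mul_pos_of_forall_ne_zero {X : Type*} [TopologicalSpace X] {s : Set X}
    (hs : IsPreconnected s) {f : X → ℝ} (hf : ContinuousOn f s) (h0 : ∀ x ∈ s, f x ≠ 0)
    {x y : X} (hx : x ∈ s) (hy : y ∈ s) : 0 < f x * f y := by
  have hIVT {u v : X} (hu : u ∈ s) (hv : v ∈ s) : ¬(f u < 0 ∧ 0 < f v) := fun ⟨hu', hv'⟩ ↦ by
    obtain ⟨z, hz, hfz⟩ := hs.intermediate_value hu hv hf ⟨hu'.le, hv'.le⟩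
    exact h0 z hz hfz
  rcases (h0 x hx).lt_or_gt with hfx | hfx <;> rcases (h0 y hy).lt_or_gt with hfy | hfy
  · exact mul_pos_of_neg_of_neg hfx hfy
  · exact absurd ⟨hfx, hfy⟩ (hIVT hx hy)
  · exact absurd ⟨hfy, hfx⟩ (hIVT hy hx)
  · exact mul_pos hfx hfy

open Topology in
lemma Icc_subset_closure_of_inter_Icc_nonempty {s : Set ℝ} {l u : ℝ} (hlu : l < u)
    (h : ∀ a b, l ≤ a → a < b → b < u → (s ∩ Icc a b).Nonempty) : Icc l u ⊆ closure s := by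
  rw [← closure_Ioo hlu.ne]
  refine closure_minimal (fun q hq ↦ mem_closure_iff_nhds.mpr fun t ht ↦ ?_) isClosed_closure
  obtain ⟨v, w, ⟨hvq, hqw⟩, hvw⟩ :=
    mem_nhds_iff_exists_Ioo_subset.mp (inter_mem ht (Ioo_mem_nhds hq.1 hq.2))
  have hsub : Icc ((v + q) / 2) ((q + w) / 2) ⊆ t ∩ Ioo l u := fun y hy ↦
    hvw ⟨by linarith [hy.1], by linarith [hy.2]⟩
  have hleft := (hsub ⟨le_rfl, by linarith⟩).2
  have hright := (hsub ⟨by linarith, le_rfl⟩).2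
  obtain ⟨y, hys, hy⟩ := h _ _ hleft.1.le (by linarith) hright.2
  exact ⟨y, (hsub hy).1, hys⟩

namespace littlewoodRoots

lemma inter_Icc_nonempty {a b : ℝ} (ha : 1 / 2 ≤ a) (hab : a < b) (hb : b < 1) :
    (littlewoodRoots ∩ Icc a b).Nonempty := by
  by_contra hempty
  set ρ := rhoSharpTL a
  have hρ : IsSign ρ := isSign_rhoSharpTL a
  set P : ℕ → ℝ[X] := fun n ↦ PowerSeries.trunc (n + 1) (PowerSeries.mk ρ)
  have heval (n : ℕ) (y : ℝ) : (P n).eval y = ∑ k ∈ Finset.range (n + 1), ρ k * y ^ k := by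
    simp [P, eval, PowerSeries.eval₂_trunc_eq_sum_range]
  have hstep : ∀ x ∈ Icc a b, ∀ n, ρ (n + 1) * ∑ k ∈ Finset.range (n + 1), ρ k * x ^ k ≤ 0 := by
    intro x hx n
    have hP : IsLittlewood (P n) := PowerSeries.isLittlewood_trunc (fun k ↦ by simpa using hρ k) n
    have hsign : 0 < (P n).eval a * (P n).eval x :=
      isPreconnected_Icc.mul_pos_of_forall_ne_zero (P n).continuous.continuousOn
        (fun y hy hy0 ↦ hempty ⟨y, ⟨P n, hP, hy0⟩, hy⟩) (left_mem_Icc.mpr hab.le) hx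
    have hgreedy := rhoSharpTL_succ_mul_sum_nonpos a n
    rw [heval, heval] at hsign
    nlinarith [sq_nonneg (∑ k ∈ Finset.range (n + 1), ρ k * x ^ k)]
  have hzero : ρ = 0 := by
    refine eq_zero_of_tsum_mul_pow_eqOn_Ioo (fun n ↦ (hρ.abs_eq_one n).le) (by linarith) hab hb.le
      fun x hx ↦ tsum_mul_pow_eq_zero hρ (ha.trans hx.1.le) (hx.2.trans hb)
        (hstep x (Ioo_subset_Icc_self hx))
  have h0 := congr_fun hzero 0
  simp [ρ, rhoSharpTL, sharpAuxTL] at h0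

lemma Icc_half_two_subset_closure : Icc (1 / 2 : ℝ) 2 ⊆ closure littlewoodRoots := by
  have hsmall : Icc (1 / 2 : ℝ) 1 ⊆ closure littlewoodRoots :=
    Icc_subset_closure_of_inter_Icc_nonempty (by norm_num) fun _ _ ↦ inter_Icc_nonempty
  intro x hx
  rcases le_total x 1 with h | h
  · exact hsmall ⟨hx.1, h⟩
  have hx0 : x ≠ 0 := by linarith [hx.1]
  have hinv : x⁻¹ ∈ Icc (1 / 2 : ℝ) 1 := by
    rw [mem_Icc, inv_le_one₀ (by linarith), le_inv_comm₀ (by norm_num) (by linarith)]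
    exact ⟨by linarith [hx.2], h⟩
  simpa using (continuousAt_inv₀ (inv_ne_zero hx0)).continuousWithinAt.mem_closure
    (hsmall hinv) fun y hy ↦ inv_mem hy

end littlewoodRoots

theorem closure_littlewood_real_roots :
    closure {x : ℝ | ∃ P : Polynomial ℝ,
        (∀ i : ℕ, i ≤ P.natDegree → P.coeff i = 1 ∨ P.coeff i = -1)
        ∧ Polynomial.eval x P = 0}
      = Set.Icc (-2 : ℝ) (-1 / 2) ∪ Set.Icc (1 / 2 : ℝ) 2 := by
  change closure littlewoodRoots = _
  refine (closure_minimal littlewoodRoots.subset_Icc_union_Icc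
    (isClosed_Icc.union isClosed_Icc)).antisymm ?_
  rintro x (hx | hx)
  · have hneg : -x ∈ Icc (1 / 2 : ℝ) 2 := ⟨by linarith [hx.2], by linarith [hx.1]⟩
    simpa using continuous_neg.continuousWithinAt.mem_closure
      (littlewoodRoots.Icc_half_two_subset_closure hneg) fun y hy ↦ littlewoodRoots.neg_mem hy
  · exact littlewoodRoots.Icc_half_two_subset_closure hx
end
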